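/- arXiv:math/0701819 — 2 statements merged into one kernel-verified Lean document; each statement's English description precedes it below -/
import Mathlib

section
/- The spectrum of an almost periodic function f : ℝ^m → ℂ, defined as the set of λ ∈ ℝ^m for which the mean value lim_{T→∞}(2T)^{-m}∫_{[-T,T]^m} f(x) e^{-i⟨x,λ⟩} dx is nonzero, is at most countable. -/
open scoped UniformConvergence
open MeasureTheory Filter

def translates {m : ℕ} (f : (Fin m → ℝ) → ℂ) : Set ((Fin m → ℝ) →ᵤ ℂ) :=
  {g | ∃ t : Fin m → ℝ, g = UniformFun.ofFun fun x => f (x + t)}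

def AlmostPeriodic {m : ℕ} (f : (Fin m → ℝ) → ℂ) : Prop :=
  Continuous f ∧ IsCompact (closure (translates f))

/-!
An almost periodic function is bounded, say by `C`: evaluation at `0` maps the compact closure
of its translates onto a bounded set containing all its values. For a finite set `S` of
frequencies, the trigonometric polynomial `P x = ∑ μ ∈ S, M μ * exp (i⟨x, μ⟩)` has the same mean
values `M λ` as `f` at every `λ ∈ S`, because the characters are orthogonal for the mean over the
cubes `[-T, T]^m`. Taking the mean of `0 ≤ |f - P|²` then gives Bessel's inequality
`∑ λ ∈ S, |M λ|² ≤ C²`, so `λ ↦ |M λ|²` is summable and its support is countable.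
-/

theorem AlmostPeriodic.exists_norm_le {m : ℕ} {f : (Fin m → ℝ) → ℂ} (hf : AlmostPeriodic f) :
    ∃ C, ∀ x, ‖f x‖ ≤ C := by
  have heval : Continuous fun g : (Fin m → ℝ) →ᵤ ℂ => UniformFun.toFun g 0 :=
    (UniformFun.uniformContinuous_eval ℂ 0).continuous
  obtain ⟨C, hC⟩ := (hf.2.image heval).isBounded.exists_norm_le
  exact ⟨C, fun x => hC _ ⟨_, subset_closure ⟨x, rfl⟩, by simp⟩⟩

namespace MeanValue

open Complex ComplexConjugate Topology

variable {m : ℕ}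

def cube (m : ℕ) (T : ℝ) : Set (Fin m → ℝ) := {x | ∀ i, x i ∈ Set.Icc (-T) T}

theorem cube_eq_pi (T : ℝ) : cube m T = Set.univ.pi fun _ => Set.Icc (-T) T := by
  ext x
  simp only [cube, Set.mem_ofPred_eq, Set.mem_univ_pi]

theorem isCompact_cube (T : ℝ) : IsCompact (cube m T) := by
  rw [cube_eq_pi]
  exact isCompact_univ_pi fun _ => isCompact_Icc

theorem measurableSet_cube (T : ℝ) : MeasurableSet (cube m T) := by
  rw [cube_eq_pi]
  exact .univ_pi fun _ => measurableSet_Icc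

theorem measureReal_cube {T : ℝ} (hT : 0 ≤ T) : volume.real (cube m T) = (2 * T) ^ m := by
  rw [measureReal_def, cube_eq_pi, volume_pi_pi]
  simp only [Real.volume_Icc, Finset.prod_const, Finset.card_univ, Fintype.card_fin,
    ENNReal.toReal_pow]
  rw [ENNReal.toReal_ofReal (by linarith)]
  ring

theorem integral_cube_prod (g : Fin m → ℝ → ℂ) (T : ℝ) :
    ∫ x in cube m T, ∏ i, g i (x i) = ∏ i, ∫ t in Set.Icc (-T) T, g i t := by
  rw [cube_eq_pi, volume_pi, Measure.restrict_pi_pi]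
  exact integral_fintype_prod_eq_prod g

theorem _root_.Continuous.integrableOn_cube {E : Type*} [NormedAddCommGroup E] {g : (Fin m → ℝ) → E}
    (hg : Continuous g) (T : ℝ) : IntegrableOn g (cube m T) :=
  hg.continuousOn.integrableOn_compact (isCompact_cube T)

noncomputable def cubeMean (T : ℝ) (g : (Fin m → ℝ) → ℂ) : ℂ :=
  (((2 * T) ^ m)⁻¹ : ℝ) • ∫ x in cube m T, g x

def HasMean (g : (Fin m → ℝ) → ℂ) (c : ℂ) : Prop :=
  Tendsto (fun T => cubeMean T g) atTop (𝓝 c)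

theorem HasMean.const_mul {g : (Fin m → ℝ) → ℂ} {a : ℂ} (h : HasMean g a) (c : ℂ) :
    HasMean (fun x => c * g x) (c * a) := by
  refine (Tendsto.const_mul c h).congr fun T => ?_
  simp only [cubeMean, integral_const_mul, mul_smul_comm]

theorem HasMean.sub {g h : (Fin m → ℝ) → ℂ} {a b : ℂ} (hg : Continuous g) (hh : Continuous h)
    (hga : HasMean g a) (hhb : HasMean h b) : HasMean (fun x => g x - h x) (a - b) := by
  refine (Tendsto.sub hga hhb).congr fun T => ?_
  simp only [cubeMean, integral_sub (hg.integrableOn_cube T) (hh.integrableOn_cube T), smul_sub]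

theorem HasMean.sum {ι : Type*} {S : Finset ι} {g : ι → (Fin m → ℝ) → ℂ} {a : ι → ℂ}
    (hg : ∀ i ∈ S, Continuous (g i)) (h : ∀ i ∈ S, HasMean (g i) (a i)) :
    HasMean (fun x => ∑ i ∈ S, g i x) (∑ i ∈ S, a i) := by
  refine (tendsto_finsetSum S h).congr fun T => ?_
  simp only [cubeMean, integral_finsetSum S fun i hi => (hg i hi).integrableOn_cube T,
    Finset.smul_sum]

theorem re_cubeMean_le {g : (Fin m → ℝ) → ℂ} (hg : Continuous g) {C : ℝ} (hC : ∀ x, (g x).re ≤ C)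
    {T : ℝ} (hT : 0 < T) : (cubeMean T g).re ≤ C := by
  have hint : ∫ x in cube m T, (g x).re ≤ ∫ _ in cube m T, C :=
    setIntegral_mono_on (continuous_re.comp hg |>.integrableOn_cube T)
      (continuous_const.integrableOn_cube T) (measurableSet_cube T) fun x _ => hC x
  have hre : (∫ x in cube m T, g x).re = ∫ x in cube m T, (g x).re :=
    (integral_re (hg.integrableOn_cube T)).symm
  rw [setIntegral_const, measureReal_cube hT.le, smul_eq_mul] at hint
  rw [cubeMean, Complex.smul_re, hre, smul_eq_mul, inv_mul_le_iff₀ (by positivity)]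
  linarith

theorem HasMean.re_le {g : (Fin m → ℝ) → ℂ} {c : ℂ} (h : HasMean g c) (hg : Continuous g) {C : ℝ}
    (hC : ∀ x, (g x).re ≤ C) : c.re ≤ C :=
  le_of_tendsto ((continuous_re.tendsto c).comp h)
    ((eventually_gt_atTop 0).mono fun _ hT => re_cubeMean_le hg hC hT)

noncomputable def expInner (ν x : Fin m → ℝ) : ℂ :=
  exp (-(I * ∑ i, x i * ν i))

@[fun_prop]
theorem continuous_expInner (ν : Fin m → ℝ) : Continuous (expInner ν) := by
  unfold expInner
  fun_prop

theorem expInner_eq_prod (ν x : Fin m → ℝ) :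
    expInner ν x = ∏ i, exp (-(I * (x i * ν i))) := by
  rw [expInner, ← exp_sum]
  push_cast
  rw [Finset.mul_sum, Finset.sum_neg_distrib]

theorem expInner_mul_conj (ν ρ x : Fin m → ℝ) :
    expInner ν x * conj (expInner ρ x) = expInner (ν - ρ) x := by
  rw [expInner, expInner, expInner, ← exp_conj, ← exp_add]
  simp only [map_neg, map_mul, conj_I, conj_ofReal, Pi.sub_apply, mul_sub, Finset.sum_sub_distrib]
  push_cast
  congr 1
  ring

theorem norm_integral_exp_Icc_le {a : ℝ} (ha : a ≠ 0) {T : ℝ} (hT : 0 ≤ T) :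
    ‖∫ t in Set.Icc (-T) T, exp (-(I * (t * a)))‖ ≤ 2 / |a| := by
  have hc : -(I * a) ≠ 0 := by simp [ha]
  have hexp : (fun t : ℝ => exp (-(I * (t * a)))) = fun t : ℝ => exp (-(I * a) * t) := by
    funext t
    ring_nf
  rw [integral_Icc_eq_integral_Ioc, ← intervalIntegral.integral_of_le (by linarith), hexp,
    integral_exp_mul_complex hc, norm_div]
  have hden : ‖-(I * a)‖ = |a| := by simp
  rw [hden]
  gcongr
  refine (norm_sub_le _ _).trans_eq ?_
  norm_num [norm_exp]

theorem tendsto_mean_exp_Icc (a : ℝ) :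
    Tendsto (fun T : ℝ => ((2 * T)⁻¹ : ℂ) * ∫ t in Set.Icc (-T) T, exp (-(I * (t * a))))
      atTop (𝓝 (if a = 0 then 1 else 0)) := by
  split_ifs with ha
  · refine tendsto_const_nhds.congr' ?_
    filter_upwards [eventually_gt_atTop 0] with T hT
    simp only [ha, ofReal_zero, mul_zero, neg_zero, exp_zero, setIntegral_const,
      Real.volume_real_Icc, real_smul, mul_one]
    rw [max_eq_left (by linarith)]
    have hT' : (T : ℂ) ≠ 0 := by exact_mod_cast hT.ne'
    push_cast
    field_simp
    ring
  · refine squeeze_zero_norm' ?_ (by simpa using tendsto_inv_atTop_zero.const_mul |a|⁻¹)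
    filter_upwards [eventually_gt_atTop 0] with T hT
    calc ‖((2 * T)⁻¹ : ℂ) * ∫ t in Set.Icc (-T) T, exp (-(I * (t * a)))‖
        = (2 * T)⁻¹ * ‖∫ t in Set.Icc (-T) T, exp (-(I * (t * a)))‖ := by
          simp [abs_of_pos hT]
      _ ≤ (2 * T)⁻¹ * (2 / |a|) := by gcongr; exact norm_integral_exp_Icc_le ha hT.le
      _ = |a|⁻¹ * T⁻¹ := by field_simp

theorem hasMean_expInner (ν : Fin m → ℝ) : HasMean (expInner ν) (if ν = 0 then 1 else 0) := by
  have hprod : ∀ T, cubeMean T (expInner ν) =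
      ∏ i, ((2 * T)⁻¹ : ℂ) * ∫ t in Set.Icc (-T) T, exp (-(I * (t * ν i))) := by
    intro T
    rw [cubeMean, funext (expInner_eq_prod ν),
      integral_cube_prod (fun i t => exp (-(I * (t * ν i)))), Finset.prod_mul_distrib,
      Finset.prod_const, Finset.card_univ, Fintype.card_fin, real_smul]
    push_cast
    rw [inv_pow]
  have hlim := tendsto_finsetProd Finset.univ fun i _ => tendsto_mean_exp_Icc (ν i)
  rw [Fintype.prod_boole] at hlim
  unfold HasMean
  convert hlim.congr fun T => (hprod T).symm using 2
  simp [funext_iff]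

noncomputable def trigPoly (S : Finset (Fin m → ℝ)) (c : (Fin m → ℝ) → ℂ) (x : Fin m → ℝ) : ℂ :=
  ∑ μ ∈ S, c μ * conj (expInner μ x)

@[fun_prop]
theorem continuous_trigPoly (S : Finset (Fin m → ℝ)) (c : (Fin m → ℝ) → ℂ) :
    Continuous (trigPoly S c) := by
  unfold trigPoly
  fun_prop

theorem hasMean_trigPoly_mul_expInner {S : Finset (Fin m → ℝ)} (c : (Fin m → ℝ) → ℂ)
    {ν : Fin m → ℝ} (hν : ν ∈ S) : HasMean (fun x => trigPoly S c x * expInner ν x) (c ν) := by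
  have hexpand : (fun x => trigPoly S c x * expInner ν x) =
      fun x => ∑ μ ∈ S, c μ * expInner (ν - μ) x := by
    funext x
    simp only [trigPoly, Finset.sum_mul, ← expInner_mul_conj]
    exact Finset.sum_congr rfl fun μ _ => by ring
  have hval : ∑ μ ∈ S, c μ * (if ν - μ = 0 then 1 else 0) = c ν := by
    simp only [sub_eq_zero, mul_ite, mul_one, mul_zero, Finset.sum_ite_eq, if_pos hν]
  rw [hexpand, ← hval]
  exact HasMean.sum (fun μ _ => continuous_const.mul (continuous_expInner (ν - μ)))
    fun μ _ => (hasMean_expInner (ν - μ)).const_mul (c μ)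

theorem HasMean.mul_conj_trigPoly {g : (Fin m → ℝ) → ℂ} (hg : Continuous g)
    {S : Finset (Fin m → ℝ)} {c : (Fin m → ℝ) → ℂ}
    (h : ∀ ν ∈ S, HasMean (fun x => g x * expInner ν x) (c ν)) :
    HasMean (fun x => g x * conj (trigPoly S c x)) ((∑ ν ∈ S, ‖c ν‖ ^ 2 : ℝ) : ℂ) := by
  have hexpand : (fun x => g x * conj (trigPoly S c x)) =
      fun x => ∑ ν ∈ S, conj (c ν) * (g x * expInner ν x) := by
    funext x
    simp only [trigPoly, map_sum, map_mul, conj_conj, Finset.mul_sum]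
    exact Finset.sum_congr rfl fun ν _ => by ring
  have hval : ∑ ν ∈ S, conj (c ν) * c ν = ((∑ ν ∈ S, ‖c ν‖ ^ 2 : ℝ) : ℂ) := by
    push_cast
    exact Finset.sum_congr rfl fun ν _ => conj_mul' (c ν)
  rw [hexpand, ← hval]
  exact HasMean.sum (fun ν _ => continuous_const.mul (hg.mul (continuous_expInner ν)))
    fun ν hν => (h ν hν).const_mul (conj (c ν))

theorem re_two_mul_mul_conj_sub_le (z w : ℂ) : (2 * (z * conj w) - w * conj w).re ≤ ‖z‖ ^ 2 := by
  simp only [sub_re, mul_re, conj_re, conj_im, re_ofNat, im_ofNat, Complex.sq_norm, normSq_apply]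
  nlinarith [sq_nonneg (z.re - w.re), sq_nonneg (z.im - w.im)]

theorem sum_norm_sq_le_of_hasMean {f : (Fin m → ℝ) → ℂ} (hf : Continuous f) {C : ℝ}
    (hC : ∀ x, ‖f x‖ ≤ C) {M : (Fin m → ℝ) → ℂ}
    (hM : ∀ ν, HasMean (fun x => f x * expInner ν x) (M ν)) (S : Finset (Fin m → ℝ)) :
    ∑ ν ∈ S, ‖M ν‖ ^ 2 ≤ C ^ 2 := by
  have hfP := HasMean.mul_conj_trigPoly (S := S) hf fun ν _ => hM ν
  have hPP := HasMean.mul_conj_trigPoly (continuous_trigPoly S M) fun ν hν =>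
    hasMean_trigPoly_mul_expInner M hν
  have hre := ((hfP.const_mul 2).sub (by fun_prop) (by fun_prop) hPP).re_le (by fun_prop) fun x =>
    (re_two_mul_mul_conj_sub_le (f x) (trigPoly S M x)).trans
      (pow_le_pow_left₀ (norm_nonneg _) (hC x) 2)
  rwa [two_mul, add_sub_cancel_right, ofReal_re] at hre

end MeanValue

/-- The spectrum of an almost periodic function, i.e. the set of `λ` where the mean value
`M(λ,f)` is nonzero, is at most countable. -/
theorem almostPeriodic_spectrum_countable {m : ℕ} (f : (Fin m → ℝ) → ℂ)
    (hf : AlmostPeriodic f) (M : (Fin m → ℝ) → ℂ)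
    (hM : ∀ lam : Fin m → ℝ, Tendsto
      (fun T : ℝ => (((2 * T) ^ m)⁻¹ : ℝ) •
        ∫ x in {x : Fin m → ℝ | ∀ i, x i ∈ Set.Icc (-T) T},
          f x * Complex.exp (-(Complex.I * ∑ i, x i * lam i)))
      atTop (nhds (M lam))) :
    Set.Countable {lam : Fin m → ℝ | M lam ≠ 0} := by
  obtain ⟨C, hC⟩ := hf.exists_norm_le
  -- `hM lam` is `MeanValue.HasMean (fun x => f x * MeanValue.expInner lam x) (M lam)` unfolded.
  have hsum : Summable fun lam => ‖M lam‖ ^ 2 :=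
    summable_of_sum_le (fun _ => by positivity) (MeanValue.sum_norm_sq_le_of_hasMean hf.1 hC hM)
  simpa [Function.support] using hsum.countable_support
end

section
/- Let m > 1 and let λ₁,…,λ_N ∈ ℝ^m be linearly independent over ℤ. Then there exists λ₀ ∈ ℝ^m such that the vectors λ₀, λ₁−λ₀, …, λ_N−λ₀ are linearly independent over ℤ, generate a subgroup containing all λⱼ, and any two of them are linearly independent over ℝ. -/
/-!
Choose `λ₀` off the countably many lines through `0` and an integer combination of the `λⱼ`,
and off the lines through two of the `λⱼ`; in dimension at least two each line is Lebesgue-null,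
so such a `λ₀` exists. Avoiding the first family makes `λ₀, λ₁, …, λ_N` independent over `ℤ`,
hence also `λ₀, λ₁ − λ₀, …, λ_N − λ₀`, which differ from them by a unimodular change of
coordinates. Together, the two families exclude every real dependence between two of the new
vectors.
-/

open Function MeasureTheory

theorem affineSpan_pair_ne_top_of_one_lt_finrank {k V P : Type*} [DivisionRing k]
    [AddCommGroup V] [Module k V] [AddTorsor V P] [FiniteDimensional k V]
    (h : 1 < Module.finrank k V) (a b : P) : line[k, a, b] ≠ ⊤ := by
  intro htop
  have hspan : vectorSpan k ({a, b} : Set P) = ⊤ := by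
    rw [← direction_affineSpan, htop, AffineSubspace.direction_top]
  have hle := (collinear_iff_finrank_le_one (k := k)).1 (collinear_pair k a b)
  rw [hspan, finrank_top] at hle
  omega

theorem exists_forall_notMem_affineSubspace_of_ne_top {E ι : Type*} [NormedAddCommGroup E]
    [NormedSpace ℝ E] [FiniteDimensional ℝ E] [Countable ι] (s : ι → AffineSubspace ℝ E)
    (hs : ∀ i, s i ≠ ⊤) : ∃ x, ∀ i, x ∉ s i := by
  borelize E
  have hnull : Measure.addHaar (⋃ i, (s i : Set E)) = 0 :=
    measure_iUnion_null fun i => Measure.addHaar_affineSubspace _ _ (hs i)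
  by_contra! hcover
  have huniv : ⋃ i, (s i : Set E) = Set.univ := Set.eq_univ_of_forall fun x => by
    simpa using hcover x
  exact NeZero.ne (Measure.addHaar : Measure E) (Measure.measure_univ_eq_zero.1 (huniv ▸ hnull))

variable {R V : Type*} {n : ℕ}

theorem sum_smul_cons_sub [Ring R] [AddCommGroup V] [Module R V] (c : Fin (n + 1) → R) (x : V)
    (v : Fin n → V) :
    ∑ i, c i • (Fin.cons x fun j => v j - x : Fin (n + 1) → V) i
      = (c 0 - ∑ j : Fin n, c j.succ) • x + ∑ j, c j.succ • v j := by
  simp only [Fin.sum_univ_succ, Fin.cons_zero, Fin.cons_succ, smul_sub, Finset.sum_sub_distrib,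
    sub_smul, Finset.sum_smul]
  abel

theorem linearIndependent_int_cons_sub [AddCommGroup V] [Module ℝ V] {x : V} {v : Fin n → V}
    (hv : LinearIndependent ℤ v) (hx : ∀ c : Fin n → ℤ, x ∉ line[ℝ, 0, ∑ j, c j • v j]) :
    LinearIndependent ℤ (Fin.cons x fun j => v j - x : Fin (n + 1) → V) := by
  rw [Fintype.linearIndependent_iff] at hv ⊢
  intro c hc
  rw [sum_smul_cons_sub] at hc
  set k := c 0 - ∑ j : Fin n, c j.succ
  have hk : k = 0 := by
    by_contra hk
    refine hx (fun j => c j.succ) (mem_affineSpan_pair_iff_exists_lineMap_eq.2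
      ⟨-(k : ℝ)⁻¹, ?_⟩)
    have hkx : (k : ℝ) • x = -∑ j, c j.succ • v j := by
      rw [Int.cast_smul_eq_zsmul]
      exact eq_neg_of_add_eq_zero_left hc
    rw [AffineMap.lineMap_apply_module, smul_zero, zero_add, neg_smul, ← smul_neg, ← hkx,
      smul_smul, inv_mul_cancel₀ (Int.cast_ne_zero.2 hk), one_smul]
  have hsucc : ∀ j : Fin n, c j.succ = 0 := hv _ (by simpa [hk] using hc)
  intro i
  induction i using Fin.cases with
  | zero => simpa [k, hsucc] using hk
  | succ j => exact hsucc j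

theorem linearIndependent_pair_sub_of_notMem_affineSpan_pair {K : Type*} [Field K]
    [AddCommGroup V] [Module K V] {a b x : V} (hab : a ≠ b) (hx : x ∉ line[K, a, b]) :
    LinearIndependent K ![a - x, b - x] := by
  rw [LinearIndependent.pair_iff]
  intro s t hst
  have hst' : s + t = 0 := by
    by_contra hst'
    refine hx (mem_affineSpan_pair_iff_exists_lineMap_eq.2 ⟨(s + t)⁻¹ * t, ?_⟩)
    have hsx : (s + t) • x = s • a + t • b := by linear_combination (norm := module) -hst
    apply smul_right_injective V hst'
    dsimp only
    rw [AffineMap.lineMap_apply_module, hsx]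
    match_scalars <;> field_simp
    ring
  obtain rfl : t = -s := eq_neg_of_add_eq_zero_right hst'
  have hs : s • (a - b) = 0 := by linear_combination (norm := module) hst
  obtain rfl : s = 0 := (smul_eq_zero.1 hs).resolve_right (sub_ne_zero.2 hab)
  simp

theorem linearIndependent_pair_cons_sub {K : Type*} [Field K] [AddCommGroup V] [Module K V]
    {x : V} {v : Fin n → V} (hv : Injective v) (hv0 : ∀ j, v j ≠ 0)
    (hx0 : ∀ j, x ∉ line[K, 0, v j]) (hx : ∀ i j, x ∉ line[K, v i, v j]) {i j : Fin (n + 1)}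
    (hij : i ≠ j) :
    LinearIndependent K ![(Fin.cons x fun j => v j - x : Fin (n + 1) → V) i,
      (Fin.cons x fun j => v j - x : Fin (n + 1) → V) j] := by
  rcases Fin.eq_zero_or_eq_succ i with rfl | ⟨i, rfl⟩ <;>
    rcases Fin.eq_zero_or_eq_succ j with rfl | ⟨j, rfl⟩
  · exact absurd rfl hij
  · simpa using linearIndependent_pair_sub_of_notMem_affineSpan_pair (hv0 j).symm (hx0 j)
  · rw [LinearIndependent.pair_symm_iff]
    simpa using linearIndependent_pair_sub_of_notMem_affineSpan_pair (hv0 i).symm (hx0 i)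
  · simpa using linearIndependent_pair_sub_of_notMem_affineSpan_pair
      (hv.ne fun h => hij (congrArg Fin.succ h)) (hx i j)

/-- For `m > 1` and `λ₁,…,λ_N ∈ ℝ^m` linearly independent over `ℤ`, there is `λ₀` such
that `λ₀, λ₁−λ₀, …, λ_N−λ₀` are linearly independent over `ℤ`, generate a subgroup
containing all the `λⱼ`, and any two of them are linearly independent over `ℝ`. -/
theorem exists_basis_pairwise_real_independent {m N : ℕ} (hm : 1 < m)
    (lam : Fin N → Fin m → ℝ)
    (hind : ∀ n : Fin N → ℤ, ∑ j, (n j : ℝ) • lam j = 0 → ∀ j, n j = 0) :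
    ∃ (lam₀ : Fin m → ℝ) (mu : Fin (N + 1) → Fin m → ℝ),
      mu 0 = lam₀ ∧ (∀ j : Fin N, mu j.succ = lam j - lam₀) ∧
      (∀ c : Fin (N + 1) → ℤ, ∑ i, (c i : ℝ) • mu i = 0 → ∀ i, c i = 0) ∧
      (∀ j : Fin N, lam j ∈ AddSubgroup.closure (Set.range mu)) ∧
      (∀ i j : Fin (N + 1), i ≠ j →
        LinearIndependent ℝ (![mu i, mu j] : Fin 2 → Fin m → ℝ)) := by
  have hlam : LinearIndependent ℤ lam := Fintype.linearIndependent_iff.2 fun c hc =>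
    hind c (by simpa [Int.cast_smul_eq_zsmul] using hc)
  obtain ⟨lam₀, hlam₀⟩ := exists_forall_notMem_affineSubspace_of_ne_top
    (Sum.elim (fun c : Fin N → ℤ => line[ℝ, 0, ∑ j, c j • lam j])
      (fun p : Fin N × Fin N => line[ℝ, lam p.1, lam p.2]))
    (by rintro (c | p) <;> exact affineSpan_pair_ne_top_of_one_lt_finrank (by simpa) _ _)
  set mu : Fin (N + 1) → Fin m → ℝ := Fin.cons lam₀ fun j => lam j - lam₀
  have hmu : LinearIndependent ℤ mu :=
    linearIndependent_int_cons_sub hlam fun c => hlam₀ (.inl c)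
  refine ⟨lam₀, mu, rfl, fun j => rfl, fun c hc => ?_, fun j => ?_, fun i j hij => ?_⟩
  · exact Fintype.linearIndependent_iff.1 hmu c (by simpa [Int.cast_smul_eq_zsmul] using hc)
  · rw [show lam j = mu 0 + mu j.succ by simp [mu]]
    exact add_mem (AddSubgroup.subset_closure ⟨0, rfl⟩)
      (AddSubgroup.subset_closure ⟨j.succ, rfl⟩)
  · refine linearIndependent_pair_cons_sub hlam.injective hlam.ne_zero (fun j => ?_)
      (fun i j => hlam₀ (.inr (i, j))) hij
    simpa [Pi.single_apply] using hlam₀ (.inl (Pi.single j 1))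
end
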